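/- The space Δ, consisting of all time-translates x(· + τ) (τ ∈ ℝ) of functions x : ℝ → S that are constant on each interval [nh, (n+1)h) and whose sequence of values (x(nh))_{n∈ℤ} is an admissible bi-infinite path in a finite directed N-graph G, is compact in the metric d. -/

import Mathlib

open MeasureTheory Filter Topology

/-- Piecewise constant functions on intervals `[nh,(n+1)h)`. -/
def PC (S : Type*) (h : ℝ) : Set (ℝ → S) :=
  {x | ∀ n : ℤ, ∀ t ∈ Set.Ico ((n : ℝ) * h) (((n : ℝ) + 1) * h), x t = x ((n : ℝ) * h)}

/-- Aligned admissible functions: piecewise constant with admissible value sequence. -/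
def Adm {S : Type*} (E : S → S → Prop) (h : ℝ) : Set (ℝ → S) :=
  {x | x ∈ PC S h ∧ ∀ n : ℤ, E (x ((n : ℝ) * h)) (x (((n : ℝ) + 1) * h))}

/-- `Δ`: all time-translates of aligned admissible functions. -/
def DeltaSet {S : Type*} (E : S → S → Prop) (h : ℝ) : Set (ℝ → S) :=
  {y | ∃ x ∈ Adm E h, ∃ τ : ℝ, y = fun s => x (s + τ)}

/-- The metric in integral form. -/
noncomputable def dInt {S : Type*} [DecidableEq S] (h : ℝ) (x y : ℝ → S) : ℝ :=
  (1 / h) * ∫ t : ℝ, ((4 : ℝ) ^ (-(|⌊t / h⌋| : ℤ))) * (if x t = y t then (0 : ℝ) else 1)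

/-!
Encode an element of `Δ` by its symbol sequence `ω : ℤ → S` and a phase `τ ∈ [0, h)`.
Since `S` is finite, `[0, h] × S^ℤ` is sequentially compact, which gives a subsequence along which
the phases converge and every symbol is eventually constant; the limit sequence is again admissible.
Off the countable set where the limit function jumps, the subsequence then agrees with the
limit eventually, and dominated convergence with the integrable weight `4 ^ (-|⌊t/h⌋|)`
gives convergence in `d`.
-/

noncomputable def stepFun {S : Type*} (h : ℝ) (ω : ℤ → S) (t : ℝ) : S :=
  ω ⌊t / h⌋

section StepFun

variable {S : Type*} {E : S → S → Prop} {h : ℝ}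

lemma floor_div_eq_iff (hh : 0 < h) {t : ℝ} {n : ℤ} :
    ⌊t / h⌋ = n ↔ t ∈ Set.Ico ((n : ℝ) * h) (((n : ℝ) + 1) * h) := by
  rw [Int.floor_eq_iff, le_div_iff₀ hh, div_lt_iff₀ hh]
  rfl

lemma floor_intCast_mul_div (hh : h ≠ 0) (n : ℤ) : ⌊(n : ℝ) * h / h⌋ = n := by
  rw [mul_div_cancel_right₀ _ hh, Int.floor_intCast]

lemma stepFun_add_intCast_mul (hh : h ≠ 0) (ω : ℤ → S) (t : ℝ) (m : ℤ) :
    stepFun h ω (t + m * h) = stepFun h (fun i => ω (i + m)) t := by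
  simp only [stepFun, add_div, mul_div_cancel_right₀ _ hh, Int.floor_add_intCast]

lemma stepFun_sample_eq {z : ℝ → S} (hh : 0 < h) (hz : z ∈ PC S h) :
    stepFun h (fun i : ℤ => z (i * h)) = z :=
  funext fun t => (hz _ t ((floor_div_eq_iff hh).1 rfl)).symm

lemma stepFun_mem_Adm (hh : 0 < h) {ω : ℤ → S} (hω : ∀ i, E (ω i) (ω (i + 1))) :
    stepFun h ω ∈ Adm E h := by
  refine ⟨fun n t ht => ?_, fun n => ?_⟩
  · simp only [stepFun, (floor_div_eq_iff hh).2 ht, floor_intCast_mul_div hh.ne']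
  · have hn : ((n : ℝ) + 1) * h = ((n + 1 : ℤ) : ℝ) * h := by push_cast; ring
    simpa only [stepFun, hn, floor_intCast_mul_div hh.ne'] using hω n

lemma stepFun_comp_add_mem_DeltaSet (hh : 0 < h) {ω : ℤ → S}
    (hω : ∀ i, E (ω i) (ω (i + 1))) (τ : ℝ) :
    (fun t => stepFun h ω (t + τ)) ∈ DeltaSet E h :=
  ⟨_, stepFun_mem_Adm hh hω, τ, rfl⟩

lemma exists_stepFun_of_mem_DeltaSet (hh : 0 < h) {y : ℝ → S} (hy : y ∈ DeltaSet E h) :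
    ∃ ω : ℤ → S, (∀ i, E (ω i) (ω (i + 1))) ∧
      ∃ τ ∈ Set.Ico 0 h, y = fun t => stepFun h ω (t + τ) := by
  obtain ⟨z, ⟨hpc, hE⟩, τ, rfl⟩ := hy
  have hτ : τ = Int.fract (τ / h) * h + ⌊τ / h⌋ * h := by
    rw [Int.fract, sub_mul, div_mul_cancel₀ _ hh.ne']
    ring
  refine ⟨fun i => z ((i + ⌊τ / h⌋ : ℤ) * h), fun i => ?_, _,
    Int.fract_div_mul_self_mem_Ico h τ hh, funext fun t => ?_⟩
  · have hi := hE (i + ⌊τ / h⌋)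
    push_cast at hi ⊢
    convert hi using 3
    ring
  · calc z (t + τ)
        = stepFun h (fun i : ℤ => z (i * h)) (t + Int.fract (τ / h) * h + ⌊τ / h⌋ * h) := by
          rw [stepFun_sample_eq hh hpc, add_assoc, ← hτ]
      _ = _ := stepFun_add_intCast_mul hh.ne' _ _ _

end StepFun

lemma exists_subseq_tendsto_and_eventually_eq {X ι S : Type*} [TopologicalSpace X]
    [FirstCountableTopology X] [Countable ι] [Finite S] {K : Set X} (hK : IsCompact K)
    {τ : ℕ → X} (hτ : ∀ n, τ n ∈ K) (ω : ℕ → ι → S) :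
    ∃ τ₀ : X, ∃ ω₀ : ι → S, ∃ φ : ℕ → ℕ, StrictMono φ ∧
      Tendsto (τ ∘ φ) atTop (𝓝 τ₀) ∧ ∀ i, ∀ᶠ k in atTop, ω (φ k) i = ω₀ i := by
  let : TopologicalSpace S := ⊥
  have : DiscreteTopology S := ⟨rfl⟩
  obtain ⟨⟨τ₀, ω₀⟩, -, φ, hφ, hlim⟩ := (hK.prod isCompact_univ).tendsto_subseq
    (x := fun n => (τ n, ω n)) fun n => ⟨hτ n, Set.mem_univ _⟩
  refine ⟨τ₀, ω₀, φ, hφ, (continuous_fst.tendsto _).comp hlim, fun i => ?_⟩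
  have hi := ((continuous_apply i).tendsto _).comp ((continuous_snd.tendsto _).comp hlim)
  rwa [nhds_discrete, tendsto_pure] at hi

lemma eventually_floor_eq {α : Type*} {l : Filter α} {u : α → ℝ} {x : ℝ}
    (hu : Tendsto u l (𝓝 x)) (hx : x ∉ Set.range ((↑) : ℤ → ℝ)) :
    ∀ᶠ k in l, ⌊u k⌋ = ⌊x⌋ := by
  have hlt : (⌊x⌋ : ℝ) < x := (Int.floor_le x).lt_of_ne fun hfl => hx ⟨_, hfl⟩
  filter_upwards [hu.eventually (Ioo_mem_nhds hlt (Int.lt_floor_add_one x))] with k hk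
  exact Int.floor_eq_iff.2 ⟨hk.1.le, hk.2⟩

section Convergence

variable {S : Type*} {h : ℝ}

lemma ae_eventually_stepFun_comp_add_eq {α : Type*} {l : Filter α} (hh : 0 < h)
    {ω : α → ℤ → S} {ω₀ : ℤ → S} {τ : α → ℝ} {τ₀ : ℝ}
    (hτ : Tendsto τ l (𝓝 τ₀)) (hω : ∀ i, ∀ᶠ k in l, ω k i = ω₀ i) :
    ∀ᵐ t : ℝ, ∀ᶠ k in l, stepFun h (ω k) (t + τ k) = stepFun h ω₀ (t + τ₀) := by
  have hjumps : volume (Set.range fun n : ℤ => n * h - τ₀) = 0 :=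
    (Set.countable_range _).measure_zero _
  filter_upwards [measure_eq_zero_iff_ae_notMem.mp hjumps] with t ht
  have hfloor : ∀ᶠ k in l, ⌊(t + τ k) / h⌋ = ⌊(t + τ₀) / h⌋ := by
    refine eventually_floor_eq ((hτ.const_add t).div_const h) ?_
    rintro ⟨n, hn⟩
    refine ht ⟨n, ?_⟩
    rw [eq_div_iff hh.ne'] at hn
    simp only
    linarith
  filter_upwards [hfloor, hω ⌊(t + τ₀) / h⌋] with k hk hωk
  simp only [stepFun, hk, hωk]

lemma measurableSet_stepFun_comp_add_eq (ω ω' : ℤ → S) (τ τ' : ℝ) :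
    MeasurableSet {t : ℝ | stepFun h ω (t + τ) = stepFun h ω' (t + τ')} := by
  have hfloor : ∀ c : ℝ, Measurable fun t : ℝ => ⌊(t + c) / h⌋ := fun c =>
    Int.measurable_floor.comp ((measurable_id.add_const c).div_const h)
  exact ((hfloor τ).prodMk (hfloor τ'))
    (MeasurableSet.of_discrete (s := {p : ℤ × ℤ | ω p.1 = ω' p.2}))

lemma integrable_exp_neg_mul_abs {c : ℝ} (hc : 0 < c) :
    Integrable fun t : ℝ => Real.exp (-c * |t|) := by
  refine Integrable.of_integral_ne_zero ?_
  rw [integral_comp_abs (f := fun t => Real.exp (-c * t)),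
    integral_exp_mul_Ioi (neg_lt_zero.2 hc)]
  simp [hc.ne']

lemma four_zpow_neg_abs_floor_div_le (hh : 0 < h) (t : ℝ) :
    (4 : ℝ) ^ (-|⌊t / h⌋|) ≤ 4 * Real.exp (-(Real.log 4 / h) * |t|) := by
  set m := ⌊t / h⌋
  have hlog : 0 < Real.log 4 := Real.log_pos (by norm_num)
  have hm_le : (m : ℝ) ≤ t / h := Int.floor_le _
  have hlt_m : t / h < m + 1 := Int.lt_floor_add_one _
  have hm : |t| / h ≤ |(m : ℝ)| + 1 := by
    rw [← abs_of_pos hh, ← abs_div]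
    exact abs_le.2 ⟨by linarith [neg_abs_le (m : ℝ)], by linarith [le_abs_self (m : ℝ)]⟩
  calc (4 : ℝ) ^ (-|m|) = Real.exp (Real.log 4 * -|(m : ℝ)|) := by
        rw [← Real.rpow_intCast, Real.rpow_def_of_pos (by norm_num)]
        push_cast
        rfl
    _ ≤ Real.exp (Real.log 4 + -(Real.log 4 / h) * |t|) := by
        rw [Real.exp_le_exp, neg_mul, div_mul_comm, mul_comm (Real.log 4)]
        nlinarith [mul_le_mul_of_nonneg_left hm hlog.le]
    _ = 4 * Real.exp (-(Real.log 4 / h) * |t|) := by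
        rw [Real.exp_add, Real.exp_log (by norm_num)]

lemma integrable_four_zpow_neg_abs_floor_div (hh : 0 < h) :
    Integrable fun t : ℝ => (4 : ℝ) ^ (-|⌊t / h⌋|) := by
  have hmeas : Measurable fun t : ℝ => (4 : ℝ) ^ (-|⌊t / h⌋|) :=
    (Measurable.of_discrete (f := fun m : ℤ => (4 : ℝ) ^ (-|m|))).comp
      (Int.measurable_floor.comp (measurable_id.div_const h))
  have hc : 0 < Real.log 4 / h := div_pos (Real.log_pos (by norm_num)) hh
  refine ((integrable_exp_neg_mul_abs hc).const_mul 4).mono' hmeas.aestronglyMeasurable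
    (ae_of_all _ fun t => ?_)
  rw [Real.norm_of_nonneg (by positivity)]
  exact four_zpow_neg_abs_floor_div_le hh t

theorem tendsto_dInt_zero_of_ae_eventually_eq [DecidableEq S] {ι : Type*} {l : Filter ι}
    [l.IsCountablyGenerated] (hh : 0 < h) {f : ι → ℝ → S} {g : ℝ → S}
    (hmeas : ∀ k, MeasurableSet {t | f k t = g t}) (hlim : ∀ᵐ t, ∀ᶠ k in l, f k t = g t) :
    Tendsto (fun k => dInt h (f k) g) l (𝓝 0) := by
  have hw := integrable_four_zpow_neg_abs_floor_div hh
  have hint : Tendsto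
      (fun k => ∫ t, (4 : ℝ) ^ (-|⌊t / h⌋|) * if f k t = g t then 0 else 1) l (𝓝 (∫ _ : ℝ, 0)) := by
    refine tendsto_integral_filter_of_dominated_convergence _
      (Eventually.of_forall fun k => hw.1.mul
        (Measurable.ite (hmeas k) measurable_const measurable_const).aestronglyMeasurable)
      (Eventually.of_forall fun k => ae_of_all _ fun t => ?_) hw
      (hlim.mono fun t ht => tendsto_const_nhds.congr' (ht.mono fun k hk => by simp [hk]))
    have hpos : (0 : ℝ) ≤ (4 : ℝ) ^ (-|⌊t / h⌋|) := by positivity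
    rw [norm_mul, Real.norm_of_nonneg hpos]
    exact mul_le_of_le_one_right hpos (by split_ifs <;> simp)
  simpa [dInt] using hint.const_mul (1 / h)

end Convergence

theorem Delta_compact_general (S : Type*) [Fintype S] [DecidableEq S] (E : S → S → Prop)
    (h : ℝ) (hh : 0 < h)
    (x : ℕ → ℝ → S) (hx : ∀ n, x n ∈ DeltaSet E h) :
    ∃ y ∈ DeltaSet E h, ∃ φ : ℕ → ℕ, StrictMono φ ∧
      Tendsto (fun k => dInt h (x (φ k)) y) atTop (nhds 0) := by
  choose ω hω τ hτ hxω using fun n => exists_stepFun_of_mem_DeltaSet hh (hx n)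
  obtain ⟨τ₀, ω₀, φ, hφ, hτφ, hωφ⟩ := exists_subseq_tendsto_and_eventually_eq isCompact_Icc
    (fun n => Set.Ico_subset_Icc_self (hτ n)) ω
  have hω₀ : ∀ i, E (ω₀ i) (ω₀ (i + 1)) := fun i => by
    obtain ⟨k, hk, hk'⟩ := ((hωφ i).and (hωφ (i + 1))).exists
    simpa only [hk, hk'] using hω (φ k) i
  refine ⟨_, stepFun_comp_add_mem_DeltaSet hh hω₀ τ₀, φ, hφ, ?_⟩
  simp only [hxω]
  exact tendsto_dInt_zero_of_ae_eventually_eq hh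
    (fun _ => measurableSet_stepFun_comp_add_eq _ _ _ _)
    (ae_eventually_stepFun_comp_add_eq hh hτφ hωφ)

/-- `Δ` is (sequentially) compact in the metric `d`: every sequence in `Δ` has a
subsequence converging to an element of `Δ`. -/
theorem Delta_compact (S : Type*) [Fintype S] [DecidableEq S] (E : S → S → Prop)
    (hout : ∀ v : S, ∃ w : S, E v w) (hin : ∀ v : S, ∃ w : S, E w v)
    (h : ℝ) (hh : 0 < h)
    (x : ℕ → ℝ → S) (hx : ∀ n, x n ∈ DeltaSet E h) :
    ∃ y ∈ DeltaSet E h, ∃ φ : ℕ → ℕ, StrictMono φ ∧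
      Tendsto (fun k => dInt h (x (φ k)) y) atTop (nhds 0) :=
  Delta_compact_general S E h hh x hx
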